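/- arXiv:2310.12068 — 4 statements merged into one kernel-verified Lean document; each statement's English description precedes it below -/
import Mathlib

section
/- If there exists a pathwise embedding R_k(A,a) → R_k(B,b) between tree unravellings to finite depth k, then every existential modal formula of modal depth at most k satisfied by (A,a) is satisfied by (B,b). -/
/-- A (pointed) Kripke model over a set `V` of propositional variables. -/
structure Kripke (V : Type) where
  World : Type
  R : World → World → Prop
  val : V → World → Prop
  pt : World

/-- A homomorphism of Kripke models. -/
structure KHom {V : Type} (A B : Kripke V) where
  toFun : A.World → B.World
  map_rel : ∀ x y, A.R x y → B.R (toFun x) (toFun y)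
  map_val : ∀ p x, A.val p x → B.val p (toFun x)
  map_pt : toFun A.pt = B.pt

namespace KHom

variable {V : Type} {A B C : Kripke V}

/-- Composition of homomorphisms of Kripke models. -/
def comp (g : KHom B C) (f : KHom A B) : KHom A C where
  toFun := g.toFun ∘ f.toFun
  map_rel := fun x y h => g.map_rel _ _ (f.map_rel _ _ h)
  map_val := fun p x h => g.map_val _ _ (f.map_val _ _ h)
  map_pt := by simp [f.map_pt, g.map_pt]

/-- A pathwise embedding: a homomorphism reflecting the unary predicates. -/
def Pathwise (f : KHom A B) : Prop :=
  ∀ p x, B.val p (f.toFun x) → A.val p x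

/-- An embedding: an injective homomorphism reflecting the unary predicates
and the accessibility relation. -/
def IsEmbedding (f : KHom A B) : Prop :=
  Function.Injective f.toFun ∧ f.Pathwise ∧
    ∀ x y, B.R (f.toFun x) (f.toFun y) → A.R x y

/-- A p-morphism: a pathwise embedding satisfying the back condition. -/
def IsPMorphism (f : KHom A B) : Prop :=
  f.Pathwise ∧ ∀ x y, B.R (f.toFun x) y → ∃ x', A.R x x' ∧ f.toFun x' = y

end KHom

/-- `IsPath A l x` : `l` is a finite R-path from the distinguished element of `A` to `x`. -/
def IsPath {V : Type} (A : Kripke V) (l : List A.World) (x : A.World) : Prop :=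
  l.head? = some A.pt ∧ l.getLast? = some x ∧ l.Chain' A.R

/-- A synchronization tree: every element is reachable from the distinguished
element by a unique finite path along the accessibility relation. -/
def IsSyncTree {V : Type} (A : Kripke V) : Prop :=
  ∀ x, ∃! l, IsPath A l x

/-- Height at most `k`: every path from the root makes at most `k` steps
(i.e. has at most `k+1` elements). -/
def HeightLE {V : Type} (A : Kripke V) (k : ℕ∞) : Prop :=
  ∀ l x, IsPath A l x → (l.length : ℕ∞) ≤ k + 1

/-- A path model: the elements form a finite R-chain starting at the
distinguished element, with no other R-edges. -/
def IsPathModel {V : Type} (A : Kripke V) : Prop :=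
  ∃ l : List A.World, l ≠ [] ∧ l.Nodup ∧ l.head? = some A.pt ∧ (∀ x, x ∈ l) ∧
    ∀ x y, A.R x y ↔ ∃ i, l[i]? = some x ∧ l[i + 1]? = some y

/-- Modal formulas. -/
inductive MF (V : Type) where
  | top | bot
  | var (p : V)
  | neg (φ : MF V)
  | and (φ ψ : MF V)
  | or (φ ψ : MF V)
  | box (φ : MF V)
  | dia (φ : MF V)

/-- Kripke semantics of modal formulas. -/
def Sat {V : Type} (A : Kripke V) (w : A.World) : MF V → Prop
  | .top => True
  | .bot => False
  | .var p => A.val p w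
  | .neg φ => ¬ Sat A w φ
  | .and φ ψ => Sat A w φ ∧ Sat A w ψ
  | .or φ ψ => Sat A w φ ∨ Sat A w ψ
  | .box φ => ∀ x, A.R w x → Sat A x φ
  | .dia φ => ∃ x, A.R w x ∧ Sat A x φ

/-- Modal depth: the maximal nesting of modalities. -/
def MF.depth {V : Type} : MF V → ℕ
  | .top => 0
  | .bot => 0
  | .var _ => 0
  | .neg φ => φ.depth
  | .and φ ψ => max φ.depth ψ.depth
  | .or φ ψ => max φ.depth ψ.depth
  | .box φ => φ.depth + 1
  | .dia φ => φ.depth + 1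

/-- Existential modal formulas: no `□`, negations only on propositional variables. -/
inductive MF.IsExistential {V : Type} : MF V → Prop
  | top : MF.IsExistential .top
  | bot : MF.IsExistential .bot
  | var (p : V) : MF.IsExistential (.var p)
  | negvar (p : V) : MF.IsExistential (.neg (.var p))
  | and {φ ψ} : MF.IsExistential φ → MF.IsExistential ψ → MF.IsExistential (.and φ ψ)
  | or {φ ψ} : MF.IsExistential φ → MF.IsExistential ψ → MF.IsExistential (.or φ ψ)
  | dia {φ} : MF.IsExistential φ → MF.IsExistential (.dia φ)

/-- The tree unravelling of a Kripke model to depth `k`. -/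
def Unravel {V : Type} (A : Kripke V) (k : ℕ∞) : Kripke V where
  World := { l : List A.World // l ≠ [] ∧ l.head? = some A.pt ∧ l.Chain' A.R ∧
    (l.length : ℕ∞) ≤ k + 1 }
  R s t := ∃ x, t.val = s.val ++ [x]
  val p s := ∃ x, s.val.getLast? = some x ∧ A.val p x
  pt := ⟨[A.pt], by simp, by simp, by simp [List.Chain'], by simp⟩

/-- The projection from the unravelling, sending a sequence to its last element. -/
def projFun {V : Type} (A : Kripke V) (k : ℕ∞) : (Unravel A k).World → A.World :=
  fun s => s.val.getLast s.prop.1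

/-! Existential formulas are preserved by pathwise homomorphisms. The last-element map
`R_k(A,a) → (A,a)` is one, and conversely a formula of depth `d` true at the last element of a
path with at most `k + 1 - d` elements is true at that path in `R_k(A,a)`, since every witness
for a `◇` extends the path by one step. Thus `φ` holds at the root of `R_k(A,a)`, is carried by
the embedding to the root of `R_k(B,b)`, and projects down to `(B,b)`. -/

theorem MF.IsExistential.sat_map {V : Type} {A B : Kripke V} {φ : MF V}
    (hφ : φ.IsExistential) {f : KHom A B} (hf : f.Pathwise) {w : A.World}
    (h : Sat A w φ) : Sat B (f.toFun w) φ := by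
  induction hφ generalizing w with
  | top | bot => exact h
  | var p => exact f.map_val p w h
  | negvar p => exact fun hB => h (hf p w hB)
  | and _ _ ih₁ ih₂ => exact ⟨ih₁ h.1, ih₂ h.2⟩
  | or _ _ ih₁ ih₂ => exact h.imp ih₁ ih₂
  | dia _ ih =>
    obtain ⟨x, hwx, hx⟩ := h
    exact ⟨f.toFun x, f.map_rel w x hwx, ih hx⟩

namespace Unravel

variable {V : Type} {A : Kripke V} {k : ℕ∞}

theorem val_iff {p : V} {s : (Unravel A k).World} :
    (Unravel A k).val p s ↔ A.val p (projFun A k s) := by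
  simp [Unravel, projFun, List.getLast?_eq_some_getLast s.prop.1]

theorem projFun_pt : projFun A k (Unravel A k).pt = A.pt := rfl

theorem rel_projFun {s t : (Unravel A k).World} (hst : (Unravel A k).R s t) :
    A.R (projFun A k s) (projFun A k t) := by
  obtain ⟨x, hx⟩ := hst
  have hchain : (s.val ++ [x]).IsChain A.R := hx ▸ t.prop.2.2.1
  have hlast : projFun A k t = x := by simp [projFun, hx]
  rw [hlast]
  exact hchain.rel_getLast_head_of_append s.prop.1 (List.cons_ne_nil x [])

variable (A k) in
def proj : KHom (Unravel A k) A where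
  toFun := projFun A k
  map_rel _ _ := rel_projFun
  map_val _ _ := val_iff.mp
  map_pt := projFun_pt

theorem proj_pathwise : (proj A k).Pathwise := fun _ _ => val_iff.mpr

def snoc (s : (Unravel A k).World) {x : A.World} (hx : A.R (projFun A k s) x)
    (hlen : ((s.val.length + 1 : ℕ) : ℕ∞) ≤ k + 1) : (Unravel A k).World :=
  ⟨s.val ++ [x], by simp, by rw [List.head?_append_of_ne_nil _ s.prop.1]; exact s.prop.2.1,
    s.prop.2.2.1.append (List.isChain_singleton x) (by
      simpa [List.getLast?_eq_some_getLast s.prop.1, projFun] using hx),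
    by simpa using hlen⟩

theorem rel_snoc (s : (Unravel A k).World) {x : A.World} (hx : A.R (projFun A k s) x)
    (hlen : ((s.val.length + 1 : ℕ) : ℕ∞) ≤ k + 1) : (Unravel A k).R s (snoc s hx hlen) :=
  ⟨x, rfl⟩

theorem projFun_snoc (s : (Unravel A k).World) {x : A.World} (hx : A.R (projFun A k s) x)
    (hlen : ((s.val.length + 1 : ℕ) : ℕ∞) ≤ k + 1) : projFun A k (snoc s hx hlen) = x := by
  simp [projFun, snoc]

end Unravel

theorem MF.IsExistential.sat_unravel {V : Type} {A : Kripke V} {k : ℕ∞} {φ : MF V}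
    (hφ : φ.IsExistential) {s : (Unravel A k).World}
    (hlen : ((φ.depth + s.val.length : ℕ) : ℕ∞) ≤ k + 1) (h : Sat A (projFun A k s) φ) :
    Sat (Unravel A k) s φ := by
  induction hφ generalizing s with
  | top | bot => exact h
  | var p => exact Unravel.val_iff.mpr h
  | negvar p => exact fun hU => h (Unravel.val_iff.mp hU)
  | and _ _ ih₁ ih₂ =>
    exact ⟨ih₁ (hlen.trans' (Nat.cast_le.mpr (by simp only [MF.depth]; omega))) h.1,
      ih₂ (hlen.trans' (Nat.cast_le.mpr (by simp only [MF.depth]; omega))) h.2⟩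
  | or _ _ ih₁ ih₂ =>
    exact h.imp (ih₁ (hlen.trans' (Nat.cast_le.mpr (by simp only [MF.depth]; omega))))
      (ih₂ (hlen.trans' (Nat.cast_le.mpr (by simp only [MF.depth]; omega))))
  | @dia ψ _ ih =>
    obtain ⟨x, hsx, hx⟩ := h
    have hlen' : ((ψ.depth + (s.val.length + 1) : ℕ) : ℕ∞) ≤ k + 1 :=
      hlen.trans' (Nat.cast_le.mpr (by simp only [MF.depth]; omega))
    refine ⟨Unravel.snoc s hsx (hlen'.trans' (Nat.cast_le.mpr (by omega))),
      Unravel.rel_snoc .., ih ?_ ?_⟩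
    · simpa [Unravel.snoc] using hlen'
    · rwa [Unravel.projFun_snoc]

/-- If there exists a pathwise embedding `R_k A → R_k B` between tree
unravellings to finite depth `k`, then every existential modal formula of depth at
most `k` satisfied by `A` is satisfied by `B`. -/
theorem stmt10 {V : Type} (k : ℕ) (A B : Kripke V)
    (h : ∃ f : KHom (Unravel A (k : ℕ∞)) (Unravel B (k : ℕ∞)), f.Pathwise) :
    ∀ φ : MF V, φ.IsExistential → φ.depth ≤ k → Sat A A.pt φ → Sat B B.pt φ := by
  obtain ⟨f, hf⟩ := h
  intro φ hφ hdepth hA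
  have hroot : Sat (Unravel A k) (Unravel A k).pt φ :=
    hφ.sat_unravel (by exact_mod_cast Nat.add_le_add_right hdepth 1) hA
  have hB := hφ.sat_map Unravel.proj_pathwise (hφ.sat_map hf hroot)
  rwa [f.map_pt] at hB
end

section
/- The poset P_k of paths of height at most k ordered by embedding is a forest: for every path P, the set of paths embedding into P is linearly ordered by embeddability. -/
/-! Two paths embedding into a path `P` are carried onto initial segments of the enumeration
of `P`, because a homomorphism can only follow the unique successor edges of `P`. Initial
segments of one list are comparable, and an embedding whose image lies inside the image of
another embedding factors through it. -/

namespace List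

variable {α : Type*} {r : α → α → Prop}

theorem isChain_of_rel_getElem?_succ {l : List α}
    (h : ∀ x y, (∃ i, l[i]? = some x ∧ l[i + 1]? = some y) → r x y) : l.IsChain r :=
  isChain_iff_getElem.2 fun i hi =>
    h _ _ ⟨i, getElem?_eq_getElem (by omega), getElem?_eq_getElem hi⟩

theorem IsChain.isPrefix_of_head?_eq {l L : List α} (hl : l.IsChain r) (hL : L.Nodup)
    (hr : ∀ x y, r x y → ∃ i, L[i]? = some x ∧ L[i + 1]? = some y)
    (hhead : l.head? = L.head?) : l <+: L := by
  rw [prefix_iff_getElem?]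
  intro i
  induction i with
  | zero =>
    intro h
    rw [head?_eq_getElem?, head?_eq_getElem?, getElem?_eq_getElem h] at hhead
    exact hhead.symm
  | succ i ih =>
    intro h
    obtain ⟨j, hj, hj_succ⟩ := hr _ _ (hl.getElem i h)
    have hi : L[i]? = some l[i] := ih (by omega)
    -- `L` has no repetitions, so the edge out of `l[i]` must start at position `i`.
    have hji : i = j := (getElem?_inj (getElem?_eq_some_iff.1 hi).1 hL).1 (hi.trans hj.symm)
    exact hji ▸ hj_succ

end List

namespace KHom

variable {V : Type} {A B C : Kripke V}

theorem map_isPrefix (f : KHom A B) {lA : List A.World} {lB : List B.World}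
    (hA : lA.head? = some A.pt) (hlA : lA.IsChain A.R)
    (hB : lB.head? = some B.pt) (hlB : lB.Nodup)
    (hR : ∀ x y, B.R x y → ∃ i, lB[i]? = some x ∧ lB[i + 1]? = some y) :
    lA.map f.toFun <+: lB :=
  (List.isChain_map_of_isChain f.toFun f.map_rel hlA).isPrefix_of_head?_eq hlB hR
    (by rw [List.head?_map, hA, hB, Option.map_some, f.map_pt])

theorem IsEmbedding.exists_lift {f : KHom A C} {g : KHom B C} (hf : f.IsEmbedding)
    (hg : g.IsEmbedding) (h : Set.range f.toFun ⊆ Set.range g.toFun) :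
    ∃ e : KHom A B, e.IsEmbedding := by
  choose e he using fun x => h (Set.mem_range_self x)
  refine ⟨⟨e, fun x y hxy => hg.2.2 _ _ ?_, fun p x hx => hg.2.1 _ _ ?_, hg.1 ?_⟩,
    fun x y hxy => hf.1 ?_, fun p x hx => hf.2.1 _ _ ?_, fun x y hxy => hf.2.2 _ _ ?_⟩
  · rw [he, he]; exact f.map_rel _ _ hxy
  · rw [he]; exact f.map_val _ _ hx
  · rw [he, f.map_pt, g.map_pt]
  · rw [← he, ← he]; exact congrArg g.toFun hxy
  · rw [← he]; exact g.map_val _ _ hx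
  · rw [← he, ← he]; exact g.map_rel _ _ hxy

end KHom

theorem range_subset_range_of_map_isPrefix {V : Type} {A B C : Kripke V} {f : KHom A C}
    {g : KHom B C} {lA : List A.World} {lB : List B.World} (hA : ∀ x, x ∈ lA)
    (h : lA.map f.toFun <+: lB.map g.toFun) : Set.range f.toFun ⊆ Set.range g.toFun := by
  rintro _ ⟨x, rfl⟩
  obtain ⟨y, -, hy⟩ := List.mem_map.1 (h.subset (List.mem_map_of_mem (hA x)))
  exact ⟨y, hy⟩

theorem stmt14_general {V : Type} (P Q₁ Q₂ : Kripke V)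
    (hP : IsPathModel P)
    (hQ₁ : IsPathModel Q₁)
    (hQ₂ : IsPathModel Q₂)
    (f₁ : KHom Q₁ P) (hf₁ : f₁.IsEmbedding)
    (f₂ : KHom Q₂ P) (hf₂ : f₂.IsEmbedding) :
    (∃ g : KHom Q₁ Q₂, g.IsEmbedding) ∨ (∃ g : KHom Q₂ Q₁, g.IsEmbedding) := by
  obtain ⟨lP, -, hPnd, hPh, -, hPR⟩ := hP
  obtain ⟨l₁, -, -, h₁h, h₁m, h₁R⟩ := hQ₁
  obtain ⟨l₂, -, -, h₂h, h₂m, h₂R⟩ := hQ₂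
  have hpre₁ := f₁.map_isPrefix h₁h (List.isChain_of_rel_getElem?_succ fun x y => (h₁R x y).2)
    hPh hPnd fun x y => (hPR x y).1
  have hpre₂ := f₂.map_isPrefix h₂h (List.isChain_of_rel_getElem?_succ fun x y => (h₂R x y).2)
    hPh hPnd fun x y => (hPR x y).1
  rcases List.prefix_or_prefix_of_prefix hpre₁ hpre₂ with h | h
  · exact .inl (hf₁.exists_lift hf₂ (range_subset_range_of_map_isPrefix h₁m h))
  · exact .inr (hf₂.exists_lift hf₁ (range_subset_range_of_map_isPrefix h₂m h))

/-- The poset `P_k` of paths of height at most `k` ordered by embedding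
is a forest: the paths embedding into a given path are linearly ordered by
embeddability. -/
theorem stmt14 {V : Type} (k : ℕ∞) (P Q₁ Q₂ : Kripke V)
    (hP : IsPathModel P) (hPk : HeightLE P k)
    (hQ₁ : IsPathModel Q₁) (hQ₁k : HeightLE Q₁ k)
    (hQ₂ : IsPathModel Q₂) (hQ₂k : HeightLE Q₂ k)
    (f₁ : KHom Q₁ P) (hf₁ : f₁.IsEmbedding)
    (f₂ : KHom Q₂ P) (hf₂ : f₂.IsEmbedding) :
    (∃ g : KHom Q₁ Q₂, g.IsEmbedding) ∨ (∃ g : KHom Q₂ Q₁, g.IsEmbedding) :=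
  stmt14_general P Q₁ Q₂ hP hQ₁ hQ₂ f₁ hf₁ f₂ hf₂
end

section
/- Factorisation through: every pathwise embedding f : A → B between synchronization trees of height at most k factors as f = t ∘ j where j : A → X is an embedding, t : X → B is a surjective p-morphism, and X is a synchronization tree of height at most k; moreover X can be chosen finite if A and B are finite. -/
/-!
Graft onto every node `a` of `A` a copy of the part of `B` strictly above `f a`. The result `X`
is again a synchronization tree: a node of `A` keeps its parent from `A`, and the copy of `b`
grafted over `a` has as parent either `a` itself (when `f a R b`) or the copy of the parent of
`b`. Collapsing every graft onto `B` (and `a` onto `f a`) is a p-morphism, because each successor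
of an image point is the image of a grafted node; it is surjective since `B` is reachable from its
root, and it bounds the height of `X` by that of `B`, as homomorphisms preserve path lengths.
-/

open Relation

variable {V : Type}

def HasUniqueParents (X : Kripke V) : Prop :=
  ∀ ⦃x x' y : X.World⦄, X.R x y → X.R x' y → x = x'

namespace IsPath

variable {A B : Kripke V} {l l' : List A.World} {x y z : A.World}

theorem iff_isChain :
    IsPath A l x ↔ l.head? = some A.pt ∧ l.getLast? = some x ∧ l.IsChain A.R :=
  Iff.rfl

theorem ne_nil (h : IsPath A l x) : l ≠ [] := by
  rintro rfl
  simp [IsPath] at h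

theorem root : IsPath A [A.pt] A.pt := ⟨rfl, rfl, .singleton _⟩

theorem singleton_iff : IsPath A [x] y ↔ x = A.pt ∧ y = A.pt := by
  simp only [iff_isChain, List.head?_cons, List.getLast?_singleton, Option.some.injEq,
    List.isChain_singleton, and_true]
  grind

theorem concat_iff (hl : l ≠ []) :
    IsPath A (l ++ [y]) z ↔ z = y ∧ ∃ x, IsPath A l x ∧ A.R x y := by
  simp only [iff_isChain, List.head?_append_of_ne_nil _ hl, List.getLast?_concat,
    Option.some.injEq, List.isChain_append, List.isChain_singleton, List.head?_cons,
    Option.mem_def, List.getLast?_eq_some_getLast hl]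
  grind

theorem concat (h : IsPath A l x) (hxy : A.R x y) : IsPath A (l ++ [y]) y :=
  (concat_iff h.ne_nil).2 ⟨rfl, x, h, hxy⟩

theorem map (f : KHom A B) (h : IsPath A l x) : IsPath B (l.map f.toFun) (f.toFun x) := by
  obtain ⟨hhead, hlast, hchain⟩ := h
  refine ⟨?_, ?_, ?_⟩
  · rw [List.head?_map, hhead, Option.map_some, f.map_pt]
  · rw [List.getLast?_map, hlast, Option.map_some]
  · exact (List.isChain_map f.toFun).2 (List.IsChain.imp f.map_rel hchain)

theorem reflTransGen (h : IsPath A l x) : ReflTransGen A.R A.pt x := by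
  have hl := h.ne_nil
  obtain ⟨hhead, hlast, hchain⟩ := h
  rw [List.head?_eq_some_head hl, Option.some.injEq] at hhead
  rw [List.getLast?_eq_some_getLast hl, Option.some.injEq] at hlast
  exact hhead ▸ hlast ▸ List.relationReflTransGen_of_exists_isChain l hchain hl

theorem eq_of_length_eq (hA : HasUniqueParents A) (h : IsPath A l y) (h' : IsPath A l' y)
    (hlen : l.length = l'.length) : l = l' := by
  induction l using List.reverseRecOn generalizing l' y with
  | nil => exact absurd rfl h.ne_nil
  | append_singleton m a ih =>
    obtain rfl | ⟨m', a', rfl⟩ := List.eq_nil_or_concat l'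
    · exact absurd rfl h'.ne_nil
    rw [List.concat_eq_append] at h' hlen ⊢
    simp only [List.length_append, List.length_singleton, Nat.add_right_cancel_iff] at hlen
    rcases eq_or_ne m [] with rfl | hm
    · rw [List.length_nil, eq_comm, List.length_eq_zero_iff] at hlen
      subst hlen
      rw [List.nil_append, singleton_iff] at h h'
      rw [h.1, h'.1]
    · have hm' : m' ≠ [] := by rintro rfl; exact hm (List.length_eq_zero_iff.1 hlen)
      obtain ⟨rfl, x, hx, hxy⟩ := (concat_iff hm).1 h
      obtain ⟨rfl, x', hx', hxy'⟩ := (concat_iff hm').1 h'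
      rw [ih (hA hxy hxy' ▸ hx) hx' hlen]

end IsPath

theorem HeightLE.of_hom {X B : Kripke V} {k : ℕ∞} (hB : HeightLE B k) (t : KHom X B) :
    HeightLE X k := fun l x h => by
  simpa only [List.length_map] using hB _ _ (h.map t)

namespace IsSyncTree

variable {A B X : Kripke V} {l : List A.World} {x y : A.World}

/-- The number of nodes on the path from the root to `x`, so the root has `pathLength` one. -/
noncomputable def pathLength (hA : IsSyncTree A) (x : A.World) : ℕ :=
  (hA x).exists.choose.length

theorem length_eq_pathLength (hA : IsSyncTree A) (h : IsPath A l x) :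
    l.length = hA.pathLength x := by
  rw [(hA x).unique h (hA x).exists.choose_spec, pathLength]

theorem pathLength_of_rel (hA : IsSyncTree A) (h : A.R x y) :
    hA.pathLength y = hA.pathLength x + 1 := by
  obtain ⟨l, hl, -⟩ := hA x
  rw [← hA.length_eq_pathLength hl, ← hA.length_eq_pathLength (hl.concat h),
    List.length_append, List.length_singleton]

theorem pathLength_lt_of_transGen (hA : IsSyncTree A) (h : TransGen A.R x y) :
    hA.pathLength x < hA.pathLength y := by
  induction h with
  | single h => rw [hA.pathLength_of_rel h]; omega
  | tail _ h ih => rw [hA.pathLength_of_rel h]; omega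

theorem hasUniqueParents (hA : IsSyncTree A) : HasUniqueParents A := by
  intro x x' y h h'
  obtain ⟨l, hl, -⟩ := hA x
  obtain ⟨l', hl', -⟩ := hA x'
  have : l = l' := List.append_cancel_right ((hA y).unique (hl.concat h) (hl'.concat h'))
  subst this
  exact Option.some.inj (hl.2.1.symm.trans hl'.2.1)

theorem reflTransGen_pt (hA : IsSyncTree A) (x : A.World) : ReflTransGen A.R A.pt x :=
  (hA x).exists.choose_spec.reflTransGen

theorem exists_rel_of_ne_pt (hA : IsSyncTree A) (hx : x ≠ A.pt) : ∃ z, A.R z x := by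
  obtain rfl | ⟨z, -, hz⟩ := (hA.reflTransGen_pt x).cases_tail
  · exact absurd rfl hx
  · exact ⟨z, hz⟩

theorem not_transGen_self (hA : IsSyncTree A) (x : A.World) : ¬ TransGen A.R x x :=
  fun h => lt_irrefl _ (hA.pathLength_lt_of_transGen h)

theorem exists_isPath_of_hom (hB : IsSyncTree B) (t : KHom X B)
    (hpar : ∀ y, y ≠ X.pt → ∃ x, X.R x y) (y : X.World) : ∃ l, IsPath X l y := by
  by_cases hy : y = X.pt
  · exact ⟨_, hy ▸ IsPath.root⟩
  obtain ⟨x, hxy⟩ := hpar y hy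
  have : hB.pathLength (t.toFun x) < hB.pathLength (t.toFun y) := by
    rw [hB.pathLength_of_rel (t.map_rel _ _ hxy)]
    omega
  obtain ⟨l, hl⟩ := exists_isPath_of_hom hB t hpar x
  exact ⟨_, hl.concat hxy⟩
termination_by hB.pathLength (t.toFun y)

theorem of_hom (hB : IsSyncTree B) (t : KHom X B) (hpar : ∀ y, y ≠ X.pt → ∃ x, X.R x y)
    (huniq : HasUniqueParents X) : IsSyncTree X := by
  intro y
  obtain ⟨l, hl⟩ := exists_isPath_of_hom hB t hpar y
  refine ⟨l, hl, fun l' hl' => hl'.eq_of_length_eq huniq hl ?_⟩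
  have hmap : l'.map t.toFun = l.map t.toFun := (hB _).unique (hl'.map t) (hl.map t)
  simpa only [List.length_map] using congrArg List.length hmap

end IsSyncTree

theorem KHom.IsPMorphism.surjective {X B : Kripke V} {t : KHom X B} (ht : t.IsPMorphism)
    (hB : ∀ b, ReflTransGen B.R B.pt b) : Function.Surjective t.toFun := by
  intro b
  induction hB b with
  | refl => exact ⟨X.pt, t.map_pt⟩
  | tail _ hcb ih =>
    obtain ⟨x, rfl⟩ := ih
    obtain ⟨x', -, hx'⟩ := ht.2 x _ hcb
    exact ⟨x', hx'⟩

namespace KHom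

variable {A B : Kripke V} (f : KHom A B)

/-- The node `.inr ⟨(a, b), _⟩` is the copy of `b` grafted over `a`. -/
def factorModel : Kripke V where
  World := A.World ⊕ {p : A.World × B.World // TransGen B.R (f.toFun p.1) p.2}
  R
    | .inl a, .inl a' => A.R a a'
    | .inl a, .inr q => q.1.1 = a ∧ B.R (f.toFun a) q.1.2
    | .inr p, .inr q => q.1.1 = p.1.1 ∧ B.R p.1.2 q.1.2
    | .inr _, .inl _ => False
  val
    | v, .inl a => A.val v a
    | v, .inr q => B.val v q.1.2
  pt := .inl A.pt

instance [Finite A.World] [Finite B.World] : Finite f.factorModel.World :=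
  inferInstanceAs (Finite (_ ⊕ _))

def factorEmb : KHom A f.factorModel where
  toFun := Sum.inl
  map_rel _ _ h := h
  map_val _ _ h := h
  map_pt := rfl

def factorProj : KHom f.factorModel B where
  toFun
    | .inl a => f.toFun a
    | .inr q => q.1.2
  map_rel := by
    rintro (a | p) (a' | q) h
    · exact f.map_rel _ _ h
    · exact h.2
    · exact h.elim
    · exact h.2
  map_val := by
    rintro v (a | q) h
    · exact f.map_val _ _ h
    · exact h
  map_pt := f.map_pt

theorem factorEmb_isEmbedding : f.factorEmb.IsEmbedding :=
  ⟨Sum.inl_injective, fun _ _ h => h, fun _ _ h => h⟩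

theorem factorProj_isPMorphism (hf : f.Pathwise) : f.factorProj.IsPMorphism := by
  refine ⟨?_, ?_⟩
  · rintro v (a | q) h
    · exact hf v a h
    · exact h
  · rintro (a | ⟨⟨a, b⟩, hab⟩) c hc
    · exact ⟨.inr ⟨(a, c), .single hc⟩, ⟨rfl, hc⟩, rfl⟩
    · exact ⟨.inr ⟨(a, c), hab.tail hc⟩, ⟨rfl, hc⟩, rfl⟩

theorem factorProj_comp_factorEmb : f.factorProj.comp f.factorEmb = f := rfl

theorem hasUniqueParents_factorModel (hA : IsSyncTree A) (hB : IsSyncTree B) :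
    HasUniqueParents f.factorModel := by
  rintro (a₁ | ⟨⟨a₁, b₁⟩, h₁⟩) (a₂ | ⟨⟨a₂, b₂⟩, h₂⟩) (a | ⟨⟨a, b⟩, _⟩) e₁ e₂
  · exact congrArg Sum.inl (hA.hasUniqueParents e₁ e₂)
  · exact congrArg Sum.inl (e₁.1.symm.trans e₂.1)
  · exact e₂.elim
  -- In the two mixed cases both parents map to the parent of `b`, but a graft over `a` lies
  -- strictly above `f a`.
  · obtain ⟨rfl, e₁⟩ := e₁
    obtain ⟨rfl, e₂⟩ := e₂
    obtain rfl := hB.hasUniqueParents e₁ e₂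
    exact (hB.not_transGen_self _ h₂).elim
  · exact e₁.elim
  · obtain ⟨rfl, e₁⟩ := e₁
    obtain ⟨rfl, e₂⟩ := e₂
    obtain rfl := hB.hasUniqueParents e₁ e₂
    exact (hB.not_transGen_self _ h₁).elim
  · exact e₁.elim
  · obtain ⟨rfl, e₁⟩ := e₁
    obtain ⟨rfl, e₂⟩ := e₂
    obtain rfl := hB.hasUniqueParents e₁ e₂
    rfl

theorem exists_rel_factorModel (hA : IsSyncTree A) (y : f.factorModel.World)
    (hy : y ≠ f.factorModel.pt) : ∃ x, f.factorModel.R x y := by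
  rcases y with a | ⟨⟨a, b⟩, hab⟩
  · obtain ⟨z, hz⟩ := hA.exists_rel_of_ne_pt (x := a) fun h => hy (congrArg Sum.inl h)
    exact ⟨.inl z, hz⟩
  · obtain ⟨c, hac, hcb⟩ := TransGen.tail'_iff.1 hab
    rcases reflTransGen_iff_eq_or_transGen.1 hac with rfl | hac
    · exact ⟨.inl a, rfl, hcb⟩
    · exact ⟨.inr ⟨(a, c), hac⟩, rfl, hcb⟩

theorem isSyncTree_factorModel (hA : IsSyncTree A) (hB : IsSyncTree B) :
    IsSyncTree f.factorModel :=
  hB.of_hom f.factorProj (f.exists_rel_factorModel hA) (f.hasUniqueParents_factorModel hA hB)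

end KHom

theorem stmt16_general {V : Type} (k : ℕ∞) (A B : Kripke V)
    (hA : IsSyncTree A) (hB : IsSyncTree B) (hBk : HeightLE B k)
    (f : KHom A B) (hf : f.Pathwise) :
    (∃ (X : Kripke V) (j : KHom A X) (t : KHom X B),
      IsSyncTree X ∧ HeightLE X k ∧ j.IsEmbedding ∧ t.IsPMorphism ∧
        Function.Surjective t.toFun ∧ t.comp j = f) ∧
    (Finite A.World → Finite B.World →
      ∃ (X : Kripke V) (j : KHom A X) (t : KHom X B),
        Finite X.World ∧ IsSyncTree X ∧ HeightLE X k ∧ j.IsEmbedding ∧ t.IsPMorphism ∧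
          Function.Surjective t.toFun ∧ t.comp j = f) := by
  have hX : IsSyncTree f.factorModel ∧ HeightLE f.factorModel k ∧ f.factorEmb.IsEmbedding ∧
      f.factorProj.IsPMorphism ∧ Function.Surjective f.factorProj.toFun ∧
      f.factorProj.comp f.factorEmb = f :=
    ⟨f.isSyncTree_factorModel hA hB, hBk.of_hom f.factorProj, f.factorEmb_isEmbedding,
      f.factorProj_isPMorphism hf, (f.factorProj_isPMorphism hf).surjective hB.reflTransGen_pt,
      f.factorProj_comp_factorEmb⟩
  exact ⟨⟨_, _, _, hX⟩, fun _ _ => ⟨_, _, _, inferInstance, hX⟩⟩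

/-- Factorisation-through: every pathwise embedding `f : A → B` between
synchronization trees of height at most `k` factors as an embedding followed by a
surjective p-morphism through a synchronization tree of height at most `k`;
moreover `X` can be chosen finite if `A` and `B` are finite. -/
theorem stmt16 {V : Type} (k : ℕ∞) (A B : Kripke V)
    (hA : IsSyncTree A) (hAk : HeightLE A k) (hB : IsSyncTree B) (hBk : HeightLE B k)
    (f : KHom A B) (hf : f.Pathwise) :
    (∃ (X : Kripke V) (j : KHom A X) (t : KHom X B),
      IsSyncTree X ∧ HeightLE X k ∧ j.IsEmbedding ∧ t.IsPMorphism ∧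
        Function.Surjective t.toFun ∧ t.comp j = f) ∧
    (Finite A.World → Finite B.World →
      ∃ (X : Kripke V) (j : KHom A X) (t : KHom X B),
        Finite X.World ∧ IsSyncTree X ∧ HeightLE X k ∧ j.IsEmbedding ∧ t.IsPMorphism ∧
          Function.Surjective t.toFun ∧ t.comp j = f) :=
  stmt16_general k A B hA hB hBk f hf
end

section
/- Łoś–Tarski theorem for modal logic: a modal formula of modal depth at most k is preserved under embeddings of Kripke models if and only if it is logically equivalent to an existential modal formula of depth at most k. -/
/-!
Existential formulas are preserved by every homomorphism that reflects the atoms, which gives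
one direction.

For the other, let `s` be the (finite) set of variables of `φ`, and say that `b` simulates `a`
for `k` steps if the `s`-atoms agree at `a` and `b` and every successor of `a` is simulated for
`k - 1` steps by some successor of `b`. This is exactly what the existential characteristic
formula of the `k`-type of `a` expresses at `b`, and there are only finitely many `k`-types
over `s`, so the disjunction of the characteristic formulas of all models of `φ` is an
existential formula of depth `k`. It is equivalent to `φ` as soon as `φ` transfers along
simulations: if `A ⊨ φ` and `B.pt` simulates `A.pt` for `k` steps, the triples `(a, b, j)` with
`b` simulating `a` for `j` steps, stepping in both coordinates, form a model `k`-bisimilar to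
`A`; adding a copy of `B`, with an edge from each triple `(a, b, j)` to every successor of `b`,
gives a model into which the former embeds and which is `k`-bisimilar to `B` over `s`.
Preservation under this embedding carries `φ` from `A` to `B`.
-/

namespace MF

variable {V : Type}

def vars : MF V → Set V
  | .top | .bot => ∅
  | .var p => {p}
  | .neg φ | .box φ | .dia φ => φ.vars
  | .and φ ψ | .or φ ψ => φ.vars ∪ ψ.vars

theorem vars_finite : ∀ φ : MF V, φ.vars.Finite
  | .top | .bot => Set.finite_empty
  | .var p => Set.finite_singleton p
  | .neg φ | .box φ | .dia φ => vars_finite φ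
  | .and φ ψ | .or φ ψ => (vars_finite φ).union (vars_finite ψ)

noncomputable def conj (Φ : Finset (MF V)) : MF V := Φ.toList.foldr .and .top

noncomputable def disj (Φ : Finset (MF V)) : MF V := Φ.toList.foldr .or .bot

theorem sat_conj {A : Kripke V} {w : A.World} {Φ : Finset (MF V)} :
    Sat A w (conj Φ) ↔ ∀ χ ∈ Φ, Sat A w χ := by
  simp only [conj, ← Finset.mem_toList]
  induction Φ.toList with
  | nil => simp [Sat]
  | cons χ L ih => simp [Sat, ih]

theorem sat_disj {A : Kripke V} {w : A.World} {Φ : Finset (MF V)} :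
    Sat A w (disj Φ) ↔ ∃ χ ∈ Φ, Sat A w χ := by
  simp only [disj, ← Finset.mem_toList]
  induction Φ.toList with
  | nil => simp [Sat]
  | cons χ L ih => simp [Sat, ih]

theorem depth_conj_le {Φ : Finset (MF V)} {k : ℕ} (h : ∀ χ ∈ Φ, χ.depth ≤ k) :
    (conj Φ).depth ≤ k := by
  simp only [conj, ← Finset.mem_toList] at h ⊢
  generalize Φ.toList = L at h ⊢
  induction L with
  | nil => simp [depth]
  | cons χ L ih => simp_all [depth]

theorem depth_disj_le {Φ : Finset (MF V)} {k : ℕ} (h : ∀ χ ∈ Φ, χ.depth ≤ k) :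
    (disj Φ).depth ≤ k := by
  simp only [disj, ← Finset.mem_toList] at h ⊢
  generalize Φ.toList = L at h ⊢
  induction L with
  | nil => simp [depth]
  | cons χ L ih => simp_all [depth]

theorem isExistential_conj {Φ : Finset (MF V)} (h : ∀ χ ∈ Φ, χ.IsExistential) :
    (conj Φ).IsExistential := by
  simp only [conj, ← Finset.mem_toList] at h ⊢
  generalize Φ.toList = L at h ⊢
  induction L with
  | nil => exact .top
  | cons χ L ih => exact .and (h χ (.head L)) (ih fun ψ hψ => h ψ (.tail χ hψ))

theorem isExistential_disj {Φ : Finset (MF V)} (h : ∀ χ ∈ Φ, χ.IsExistential) :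
    (disj Φ).IsExistential := by
  simp only [disj, ← Finset.mem_toList] at h ⊢
  generalize Φ.toList = L at h ⊢
  induction L with
  | nil => exact .bot
  | cons χ L ih => exact .or (h χ (.head L)) (ih fun ψ hψ => h ψ (.tail χ hψ))

theorem IsExistential.sat_map_s17 {A B : Kripke V} (f : KHom A B) (hf : f.Pathwise) {ψ : MF V}
    (hψ : ψ.IsExistential) {w : A.World} (hw : Sat A w ψ) : Sat B (f.toFun w) ψ := by
  induction hψ generalizing w with
  | top | bot => exact hw
  | var p => exact f.map_val p w hw
  | negvar p => exact fun hB => hw (hf p w hB)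
  | and _ _ ih₁ ih₂ => exact ⟨ih₁ hw.1, ih₂ hw.2⟩
  | or _ _ ih₁ ih₂ => exact hw.imp ih₁ ih₂
  | dia _ ih =>
    obtain ⟨x, hwx, hx⟩ := hw
    exact ⟨f.toFun x, f.map_rel w x hwx, ih hx⟩

def PreservedUnderEmbeddings (φ : MF V) : Prop :=
  ∀ (A B : Kripke V) (f : KHom A B), f.IsEmbedding → Sat A A.pt φ → Sat B B.pt φ

end MF

section Bisimulation

variable {V : Type} {A B : Kripke V}

structure IsBoundedBisim (s : Set V) (Z : ℕ → A.World → B.World → Prop) : Prop where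
  atoms : ∀ {j a b}, Z j a b → ∀ p ∈ s, (A.val p a ↔ B.val p b)
  forth : ∀ {j a b a'}, Z (j + 1) a b → A.R a a' → ∃ b', B.R b b' ∧ Z j a' b'
  back : ∀ {j a b b'}, Z (j + 1) a b → B.R b b' → ∃ a', A.R a a' ∧ Z j a' b'

theorem IsBoundedBisim.sat_iff {s : Set V} {Z : ℕ → A.World → B.World → Prop}
    (hZ : IsBoundedBisim s Z) :
    ∀ (ψ : MF V) {j a b}, Z j a b → ψ.depth ≤ j → ψ.vars ⊆ s →
      (Sat A a ψ ↔ Sat B b ψ)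
  | .top, _, _, _, _, _, _ | .bot, _, _, _, _, _, _ => Iff.rfl
  | .var p, _, _, _, h, _, hs => hZ.atoms h p (hs rfl)
  | .neg ψ, _, _, _, h, hd, hs => not_congr (hZ.sat_iff ψ h hd hs)
  | .and ψ χ, _, _, _, h, hd, hs =>
    and_congr (hZ.sat_iff ψ h (le_of_max_le_left hd) (Set.union_subset_iff.1 hs).1)
      (hZ.sat_iff χ h (le_of_max_le_right hd) (Set.union_subset_iff.1 hs).2)
  | .or ψ χ, _, _, _, h, hd, hs =>
    or_congr (hZ.sat_iff ψ h (le_of_max_le_left hd) (Set.union_subset_iff.1 hs).1)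
      (hZ.sat_iff χ h (le_of_max_le_right hd) (Set.union_subset_iff.1 hs).2)
  | .box ψ, j + 1, a, b, h, hd, hs => by
    have ih {a' b'} (h' : Z j a' b') := hZ.sat_iff ψ h' (Nat.le_of_succ_le_succ hd) hs
    constructor
    · intro ha b' hbb'
      obtain ⟨a', haa', h'⟩ := hZ.back h hbb'
      exact (ih h').1 (ha a' haa')
    · intro hb a' haa'
      obtain ⟨b', hbb', h'⟩ := hZ.forth h haa'
      exact (ih h').2 (hb b' hbb')
  | .dia ψ, j + 1, a, b, h, hd, hs => by
    have ih {a' b'} (h' : Z j a' b') := hZ.sat_iff ψ h' (Nat.le_of_succ_le_succ hd) hs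
    constructor
    · rintro ⟨a', haa', ha'⟩
      obtain ⟨b', hbb', h'⟩ := hZ.forth h haa'
      exact ⟨b', hbb', (ih h').1 ha'⟩
    · rintro ⟨b', hbb', hb'⟩
      obtain ⟨a', haa', h'⟩ := hZ.back h hbb'
      exact ⟨a', haa', (ih h').2 hb'⟩

end Bisimulation

section Simulation

variable {V : Type} {A B : Kripke V} (s : Set V)

def BoundedSim : ℕ → A.World → B.World → Prop
  | 0, a, b => ∀ p ∈ s, (A.val p a ↔ B.val p b)
  | j + 1, a, b => (∀ p ∈ s, (A.val p a ↔ B.val p b)) ∧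
      ∀ a', A.R a a' → ∃ b', B.R b b' ∧ BoundedSim j a' b'

variable {s}

theorem BoundedSim.atoms : ∀ {j : ℕ} {a : A.World} {b : B.World},
    BoundedSim s j a b → ∀ p ∈ s, (A.val p a ↔ B.val p b)
  | 0, _, _, h => h
  | _ + 1, _, _, h => h.1

theorem BoundedSim.refl : ∀ (j : ℕ) (a : A.World), BoundedSim s j a a
  | 0, _ => fun _ _ => Iff.rfl
  | j + 1, _ => ⟨fun _ _ => Iff.rfl, fun a' h => ⟨a', h, BoundedSim.refl j a'⟩⟩

end Simulation

section CharacteristicFormulas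

variable {V : Type} (s : Set V)

def ExType : ℕ → Type
  | 0 => s → Prop
  | k + 1 => (s → Prop) × Set (ExType k)

instance ExType.finite [Finite s] : ∀ k, Finite (ExType s k)
  | 0 => inferInstanceAs (Finite (s → Prop))
  | k + 1 =>
    haveI := ExType.finite k
    inferInstanceAs (Finite ((s → Prop) × Set (ExType s k)))

def exType (A : Kripke V) : (k : ℕ) → A.World → ExType s k
  | 0, w => fun p => A.val p w
  | k + 1, w => (fun p => A.val p w, exType A k '' {x | A.R w x})

open Classical in
noncomputable def litConj [Finite s] (t : s → Prop) : MF V :=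
  MF.conj (Set.finite_range fun p : s => if t p then MF.var p.1 else .neg (.var p.1)).toFinset

noncomputable def charFormula [Finite s] : (k : ℕ) → ExType s k → MF V
  | 0, t => litConj s t
  | k + 1, t => .and (litConj s t.1)
      (MF.conj ((Set.toFinite t.2).image fun u => .dia (charFormula k u)).toFinset)

variable {s} [Finite s]

theorem sat_litConj {A : Kripke V} {w : A.World} {t : s → Prop} :
    Sat A w (litConj s t) ↔ ∀ p : s, (t p ↔ A.val p w) := by
  simp only [litConj, MF.sat_conj, Set.Finite.mem_toFinset, Set.forall_mem_range]
  refine forall_congr' fun p => ?_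
  split_ifs with hp <;> simp [Sat, hp]

theorem sat_charFormula_exType {A B : Kripke V} :
    ∀ (k : ℕ) (a : A.World) (b : B.World),
      Sat B b (charFormula s k (exType s A k a)) ↔ BoundedSim s k a b
  | 0, a, b => by simp [charFormula, exType, BoundedSim, sat_litConj]
  | k + 1, a, b => by
    simp [charFormula, exType, BoundedSim, sat_litConj, MF.sat_conj, Sat,
      sat_charFormula_exType k]

theorem depth_litConj (t : s → Prop) : (litConj s t).depth = 0 :=
  Nat.eq_zero_of_le_zero <| MF.depth_conj_le <| by
    simp only [Set.Finite.mem_toFinset, Set.forall_mem_range]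
    intro p
    split_ifs <;> rfl

theorem depth_charFormula_le :
    ∀ (k : ℕ) (t : ExType s k), (charFormula s k t).depth ≤ k
  | 0, t => (depth_litConj t).le
  | k + 1, t => max_le (by simp [depth_litConj]) <| MF.depth_conj_le <| by
    simp only [Set.Finite.mem_toFinset, Set.forall_mem_image]
    exact fun u _ => Nat.succ_le_succ (depth_charFormula_le k u)

theorem isExistential_litConj (t : s → Prop) : (litConj s t).IsExistential :=
  MF.isExistential_conj <| by
    simp only [Set.Finite.mem_toFinset, Set.forall_mem_range]
    intro p
    split_ifs
    exacts [.var _, .negvar _]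

theorem isExistential_charFormula :
    ∀ (k : ℕ) (t : ExType s k), (charFormula s k t).IsExistential
  | 0, t => isExistential_litConj t
  | k + 1, t => .and (isExistential_litConj t.1) <| MF.isExistential_conj <| by
    simp only [Set.Finite.mem_toFinset, Set.forall_mem_image]
    exact fun u _ => .dia (isExistential_charFormula k u)

end CharacteristicFormulas

section CharacteristicDisjunction

variable {V : Type} (P : Set (Kripke V)) (s : Set V) [Finite s] (k : ℕ)

noncomputable def charDisj : MF V :=
  MF.disj <| Set.toFinite
    (charFormula s k '' ((fun M : Kripke V => exType s M k M.pt) '' P)) |>.toFinset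

variable {P s k}

theorem sat_charDisj {N : Kripke V} {w : N.World} :
    Sat N w (charDisj P s k) ↔ ∃ M ∈ P, BoundedSim s k M.pt w := by
  simp [charDisj, MF.sat_disj, sat_charFormula_exType]

theorem depth_charDisj_le : (charDisj P s k).depth ≤ k :=
  MF.depth_disj_le <| by
    simp only [Set.Finite.mem_toFinset, Set.forall_mem_image]
    exact fun _ _ => depth_charFormula_le k _

theorem isExistential_charDisj : (charDisj P s k).IsExistential :=
  MF.isExistential_disj <| by
    simp only [Set.Finite.mem_toFinset, Set.forall_mem_image]
    exact fun _ _ => isExistential_charFormula k _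

end CharacteristicDisjunction

section Amalgam

variable {V : Type} {A B : Kripke V} {s : Set V}

structure SimTriple (A B : Kripke V) (s : Set V) where
  left : A.World
  right : B.World
  depth : ℕ
  sim : BoundedSim s depth left right

namespace SimTriple

def Step (x y : SimTriple A B s) : Prop :=
  x.depth = y.depth + 1 ∧ A.R x.left y.left ∧ B.R x.right y.right

def model (x₀ : SimTriple A B s) : Kripke V where
  World := SimTriple A B s
  R := Step
  val p x := A.val p x.left
  pt := x₀

def amalgam (x₀ : SimTriple A B s) : Kripke V where
  World := SimTriple A B s ⊕ B.World
  R
    | .inl x, .inl y => Step x y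
    | .inl x, .inr b => B.R x.right b
    | .inr b, .inr b' => B.R b b'
    | .inr _, .inl _ => False
  val p
    | .inl x => A.val p x.left
    | .inr b => B.val p b
  pt := .inl x₀

def inlHom (x₀ : SimTriple A B s) : KHom x₀.model x₀.amalgam where
  toFun := Sum.inl
  map_rel _ _ h := h
  map_val _ _ h := h
  map_pt := rfl

theorem inlHom_isEmbedding (x₀ : SimTriple A B s) : x₀.inlHom.IsEmbedding :=
  ⟨Sum.inl_injective, fun _ _ h => h, fun _ _ h => h⟩

theorem isBoundedBisim_model (x₀ : SimTriple A B s) :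
    IsBoundedBisim (A := x₀.model) (B := A) s fun j x a => x.left = a ∧ j ≤ x.depth where
  atoms := by
    rintro j x _ ⟨rfl, -⟩ p -
    rfl
  forth := by
    rintro j x _ y ⟨rfl, hj⟩ ⟨hdepth, hl, -⟩
    exact ⟨y.left, hl, rfl, by omega⟩
  back := by
    rintro j ⟨a, b, i, hab⟩ _ a' ⟨rfl, hj⟩ haa'
    dsimp only at hj
    obtain ⟨i, rfl⟩ : ∃ i', i = i' + 1 := ⟨i - 1, by omega⟩
    obtain ⟨b', hbb', hsim⟩ := hab.2 a' haa'
    exact ⟨⟨a', b', i, hsim⟩, ⟨rfl, haa', hbb'⟩, rfl, Nat.le_of_succ_le_succ hj⟩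

theorem isBoundedBisim_amalgam (x₀ : SimTriple A B s) :
    IsBoundedBisim (A := x₀.amalgam) (B := B) s fun j x b =>
      Sum.elim (fun y => y.right = b ∧ j ≤ y.depth) (· = b) x where
  atoms := by
    rintro j (x | b) _ h p hp
    · obtain ⟨rfl, -⟩ := h
      exact x.sim.atoms p hp
    · subst h
      rfl
  forth := by
    rintro j (x | b) _ (y | b') h hxy
    · obtain ⟨rfl, hj⟩ := h
      obtain ⟨hdepth, -, hr⟩ := hxy
      exact ⟨y.right, hr, rfl, by omega⟩
    · obtain ⟨rfl, -⟩ := h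
      exact ⟨b', hxy, rfl⟩
    · exact hxy.elim
    · subst h
      exact ⟨b', hxy, rfl⟩
  back := by
    rintro j (x | b) _ b' h hbb'
    · obtain ⟨rfl, -⟩ := h
      exact ⟨.inr b', hbb', rfl⟩
    · subst h
      exact ⟨.inr b', hbb', rfl⟩

end SimTriple

theorem MF.PreservedUnderEmbeddings.sat_of_boundedSim {φ : MF V} {k : ℕ}
    (hφ : φ.PreservedUnderEmbeddings) (hd : φ.depth ≤ k) (hs : φ.vars ⊆ s)
    (hsim : BoundedSim s k A.pt B.pt) (hA : Sat A A.pt φ) : Sat B B.pt φ := by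
  let x₀ : SimTriple A B s := ⟨A.pt, B.pt, k, hsim⟩
  have h₁ : Sat x₀.model x₀ φ :=
    (x₀.isBoundedBisim_model.sat_iff φ ⟨rfl, le_rfl⟩ hd hs).2 hA
  have h₂ : Sat x₀.amalgam (.inl x₀) φ := hφ _ _ x₀.inlHom x₀.inlHom_isEmbedding h₁
  refine (x₀.isBoundedBisim_amalgam.sat_iff φ (a := .inl x₀) ?_ hd hs).1 h₂
  exact ⟨rfl, le_rfl⟩

end Amalgam

/-- Łoś–Tarski theorem for modal logic: a modal formula of depth at
most `k` is preserved under embeddings of Kripke models iff it is logically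
equivalent to an existential modal formula of depth at most `k`. -/
theorem stmt17 {V : Type} (k : ℕ) (φ : MF V) (hφ : φ.depth ≤ k) :
    (∀ (A B : Kripke V) (f : KHom A B), f.IsEmbedding → Sat A A.pt φ → Sat B B.pt φ)
    ↔ ∃ ψ : MF V, ψ.IsExistential ∧ ψ.depth ≤ k ∧
        ∀ M : Kripke V, Sat M M.pt φ ↔ Sat M M.pt ψ := by
  refine ⟨fun (hpres : φ.PreservedUnderEmbeddings) => ?_, ?_⟩
  · have := φ.vars_finite.to_subtype
    refine ⟨charDisj {M | Sat M M.pt φ} φ.vars k, isExistential_charDisj, depth_charDisj_le,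
      fun M => ?_⟩
    rw [sat_charDisj]
    exact ⟨fun hM => ⟨M, hM, BoundedSim.refl k M.pt⟩,
      fun ⟨_, hN, hsim⟩ => hpres.sat_of_boundedSim hφ subset_rfl hsim hN⟩
  · rintro ⟨ψ, hψ, -, hequiv⟩ A B f hf hA
    have hB := hψ.sat_map_s17 f hf.2.1 ((hequiv A).1 hA)
    rw [f.map_pt] at hB
    exact (hequiv B).2 hB
end
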